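/- arXiv:2102.08852 — 3 statements merged into one kernel-verified Lean document; each statement's English description precedes it below -/
import Mathlib

section
/- Let A(λ,ξ) be the 6×6 matrix of the linearized eigenvalue system, and let ω be the symplectic form ω = du∧dp - α dv∧dq - βD dw∧dr on ℝ^6. Then for every λ, ξ, and all vectors Y1, Y2 ∈ ℝ^6, ω(Y1, A(λ,ξ)Y2) + ω(A(λ,ξ)Y1, Y2) = 0; that is, A(λ,ξ) is infinitesimally symplectic (Hamiltonian) with respect to ω. Consequently, if Y1(ξ), Y2(ξ) solve Y' = A(λ,ξ)Y, then ω(Y1(ξ), Y2(ξ)) is constant in ξ. -/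
noncomputable def omegaForm (α β D : ℝ) (X Y : Fin 6 → ℝ) : ℝ :=
  X 0 * Y 3 - X 3 * Y 0 - α * (X 1 * Y 4 - X 4 * Y 1) - β * D * (X 2 * Y 5 - X 5 * Y 2)

/-- The matrix A(λ,ξ) of the linearized eigenvalue system, as a function of
the parameters and of the value u = U(ξ). Coordinates (u,v,w,p,q,r). -/
noncomputable def Amat (α β D ε τ θ lam u : ℝ) : Matrix (Fin 6) (Fin 6) ℝ :=
  !![0, 0, 0, 1, 0, 0;
     0, 0, 0, 0, ε, 0;
     0, 0, 0, 0, 0, ε / D;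
     lam - 1 + 3 * u ^ 2, α * ε, β * ε, 0, 0, 0;
     -ε, ε * (lam * τ + 1), 0, 0, 0, 0;
     -ε / D, 0, (ε / D) * (lam * θ + 1), 0, 0, 0]

lemma consF {α : Type*} (x : α) (u : Fin 5 → α) : Matrix.vecCons x u 5 = u 4 := rfl
lemma consE {α : Type*} (x : α) (u : Fin 4 → α) : Matrix.vecCons x u 4 = u 3 := rfl
lemma consD {α : Type*} (x : α) (u : Fin 3 → α) : Matrix.vecCons x u 3 = u 2 := rfl
lemma consC {α : Type*} (x : α) (u : Fin 2 → α) : Matrix.vecCons x u 2 = u 1 := rfl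
lemma consB {α : Type*} (x : α) (u : Fin 1 → α) : Matrix.vecCons x u 1 = u 0 := rfl

lemma vec6_five {α : Type*} (a b c d e f : α) : ![a,b,c,d,e,f] 5 = f := rfl
lemma vec6_four {α : Type*} (a b c d e f : α) : ![a,b,c,d,e,f] 4 = e := rfl
lemma vec6_three {α : Type*} (a b c d e f : α) : ![a,b,c,d,e,f] 3 = d := rfl
lemma vec6_two {α : Type*} (a b c d e f : α) : ![a,b,c,d,e,f] 2 = c := rfl

/-- A(λ,ξ) is infinitesimally symplectic with respect to ω; consequently
ω(Y₁(ξ), Y₂(ξ)) is constant along any two solutions of Y' = A(λ,ξ)Y. -/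
theorem A_infinitesimally_symplectic (α β D ε τ θ : ℝ) (hD : D ≠ 0) (U : ℝ → ℝ) :
    (∀ lam ξ : ℝ, ∀ Y₁ Y₂ : Fin 6 → ℝ,
      omegaForm α β D Y₁ ((Amat α β D ε τ θ lam (U ξ)).mulVec Y₂) +
      omegaForm α β D ((Amat α β D ε τ θ lam (U ξ)).mulVec Y₁) Y₂ = 0) ∧
    (∀ lam : ℝ, ∀ Y₁ Y₂ : ℝ → Fin 6 → ℝ,
      (∀ ξ, HasDerivAt Y₁ ((Amat α β D ε τ θ lam (U ξ)).mulVec (Y₁ ξ)) ξ) →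
      (∀ ξ, HasDerivAt Y₂ ((Amat α β D ε τ θ lam (U ξ)).mulVec (Y₂ ξ)) ξ) →
      ∀ ξ₁ ξ₂ : ℝ, omegaForm α β D (Y₁ ξ₁) (Y₂ ξ₁) = omegaForm α β D (Y₁ ξ₂) (Y₂ ξ₂)) := by
  have key : ∀ lam ξ : ℝ, ∀ Y₁ Y₂ : Fin 6 → ℝ,
      omegaForm α β D Y₁ ((Amat α β D ε τ θ lam (U ξ)).mulVec Y₂) +
      omegaForm α β D ((Amat α β D ε τ θ lam (U ξ)).mulVec Y₁) Y₂ = 0 := by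
    intro lam ξ Y₁ Y₂
    simp [omegaForm, Amat, Matrix.mulVec, dotProduct, Fin.sum_univ_six,
      Matrix.cons_val_zero, Matrix.cons_val_one, Matrix.head_cons, vec6_two, vec6_three, vec6_four, vec6_five,
      consF, consE, consD, consC, consB]
    field_simp
    ring
  refine ⟨key, ?_⟩
  intro lam Y₁ Y₂ h₁ h₂ ξ₁ ξ₂
  have hconst : ∀ ξ : ℝ, HasDerivAt (fun ξ => omegaForm α β D (Y₁ ξ) (Y₂ ξ)) 0 ξ := by
    intro ξ
    have c₁ : ∀ i, HasDerivAt (fun ξ => Y₁ ξ i)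
        ((Amat α β D ε τ θ lam (U ξ)).mulVec (Y₁ ξ) i) ξ := fun i =>
      (hasDerivAt_pi.mp (h₁ ξ)) i
    have c₂ : ∀ i, HasDerivAt (fun ξ => Y₂ ξ i)
        ((Amat α β D ε τ θ lam (U ξ)).mulVec (Y₂ ξ) i) ξ := fun i =>
      (hasDerivAt_pi.mp (h₂ ξ)) i
    have := key lam ξ (Y₁ ξ) (Y₂ ξ)
    simp only [omegaForm] at this ⊢
    have H : HasDerivAt (fun ξ => Y₁ ξ 0 * Y₂ ξ 3 - Y₁ ξ 3 * Y₂ ξ 0 -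
        α * (Y₁ ξ 1 * Y₂ ξ 4 - Y₁ ξ 4 * Y₂ ξ 1) -
        β * D * (Y₁ ξ 2 * Y₂ ξ 5 - Y₁ ξ 5 * Y₂ ξ 2))
        ((omegaForm α β D (Y₁ ξ) ((Amat α β D ε τ θ lam (U ξ)).mulVec (Y₂ ξ))) +
         (omegaForm α β D ((Amat α β D ε τ θ lam (U ξ)).mulVec (Y₁ ξ)) (Y₂ ξ))) ξ := by
      have := ((((c₁ 0).mul (c₂ 3)).sub ((c₁ 3).mul (c₂ 0))).sub
          ((((c₁ 1).mul (c₂ 4)).sub ((c₁ 4).mul (c₂ 1))).const_mul α)).sub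
          ((((c₁ 2).mul (c₂ 5)).sub ((c₁ 5).mul (c₂ 2))).const_mul (β * D))
      refine this.congr_deriv ?_
      simp only [omegaForm]
      ring
    simp only [omegaForm] at H
    rw [this] at H
    exact H
  have : ∀ ξ : ℝ, (fun ξ => omegaForm α β D (Y₁ ξ) (Y₂ ξ)) ξ =
      (fun ξ => omegaForm α β D (Y₁ ξ) (Y₂ ξ)) ξ₂ := by
    intro ξ
    exact is_const_of_deriv_eq_zero (fun x => (hconst x).differentiableAt)
      (fun x => (hconst x).deriv) ξ ξ₂
  exact this ξ₁
end

section
/- Let h(x, c1) = (c1 cosh x + 1, c1 sinh x, c3(c1) cosh(x/D), c3(c1) sinh(x/D)) with c3 a differentiable function of c1, and let η2 = (1, -1, 0, 0), η3 = (0, 0, 1, -1) in (V,Q,W,R) coordinates. Then det[η2, η3, ∂h/∂x, ∂h/∂c1] = (c3/D - c1 c3') e^{x(1 + 1/D)}. -/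
theorem my_det_fin_four {R : Type*} [CommRing R] (A : Matrix (Fin 4) (Fin 4) R) :
    A.det =
      A 0 0 * (A 1 1 * (A 2 2 * A 3 3 - A 2 3 * A 3 2)
             - A 1 2 * (A 2 1 * A 3 3 - A 2 3 * A 3 1)
             + A 1 3 * (A 2 1 * A 3 2 - A 2 2 * A 3 1))
    - A 0 1 * (A 1 0 * (A 2 2 * A 3 3 - A 2 3 * A 3 2)
             - A 1 2 * (A 2 0 * A 3 3 - A 2 3 * A 3 0)
             + A 1 3 * (A 2 0 * A 3 2 - A 2 2 * A 3 0))
    + A 0 2 * (A 1 0 * (A 2 1 * A 3 3 - A 2 3 * A 3 1)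
             - A 1 1 * (A 2 0 * A 3 3 - A 2 3 * A 3 0)
             + A 1 3 * (A 2 0 * A 3 1 - A 2 1 * A 3 0))
    - A 0 3 * (A 1 0 * (A 2 1 * A 3 2 - A 2 2 * A 3 1)
             - A 1 1 * (A 2 0 * A 3 2 - A 2 2 * A 3 0)
             + A 1 2 * (A 2 0 * A 3 1 - A 2 1 * A 3 0)) := by
  rw [Matrix.det_succ_row_zero]
  simp [Fin.sum_univ_succ, Matrix.det_fin_three, Matrix.submatrix_apply, Fin.succAbove]
  have e1 : (Fin.succ 2 : Fin 4) = 3 := rfl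
  have e2 : (Fin.castSucc 2 : Fin 4) = 2 := rfl
  ring

/-- The determinant det[η₂, η₃, ∂h/∂x, ∂h/∂c₁] for the tangent space to the
manifold S of slow trajectories equals (c₃/D - c₁c₃') e^{x(1 + 1/D)}. -/
theorem slow_manifold_tangent_det (D c₁ c₃ c₃' x : ℝ) (hD : D > 0) :
    Matrix.det !![(1:ℝ), 0, c₁ * Real.sinh x, Real.cosh x;
                  -1, 0, c₁ * Real.cosh x, Real.sinh x;
                  0, 1, (c₃ / D) * Real.sinh (x / D), c₃' * Real.cosh (x / D);
                  0, -1, (c₃ / D) * Real.cosh (x / D), c₃' * Real.sinh (x / D)]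
      = (c₃ / D - c₁ * c₃') * Real.exp (x * (1 + 1 / D)) := by
  have he : Real.exp (x * (1 + 1 / D)) = Real.exp x * Real.exp (x / D) := by
    rw [← Real.exp_add]; ring_nf
  have ha := Real.exp_ne_zero x
  have hb := Real.exp_ne_zero (x / D)
  rw [my_det_fin_four]
  simp [Real.cosh_eq, Real.sinh_eq, Real.exp_neg, he, Matrix.vecHead, Matrix.vecTail]
  field_simp
  have hD0 : D ≠ 0 := ne_of_gt hD
  rw [show x * (D + 1) / D = x + x / D from by field_simp, Real.exp_add]
  ring
end

section
/- Let Z = span{η6, η2 + (1/D) η3 + (W0/D) η4 + V0 η5, -(α/β) η4 + η5} with η1,...,η6 as specified and ω as specified. If the jump-off condition holds in the form that the relevant symplectic pairings vanish (which follows from the algebraic identities among α, β, D, V0, W0), then Z is a Lagrangian 3-plane with respect to ω; specifically, ω evaluated pairwise on the three spanning vectors is zero, using ω(η2,η5) = -2α, ω(η3,η4) = -2βD, ω(η4,η5) = ω(η2,η3) = ω(η2,η4) = ω(η3,η5) = 0, ω(η6,ηi) = 0 for i = 2,3,4,5. -/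
lemma omega_add_left (α β D : ℝ) (x y z : Fin 6 → ℝ) :
    omegaForm α β D (x + y) z = omegaForm α β D x z + omegaForm α β D y z := by
  simp [omegaForm]; ring

lemma omega_smul_left (α β D c : ℝ) (x z : Fin 6 → ℝ) :
    omegaForm α β D (c • x) z = c * omegaForm α β D x z := by
  simp [omegaForm]; ring

lemma omega_add_right (α β D : ℝ) (x y z : Fin 6 → ℝ) :
    omegaForm α β D z (x + y) = omegaForm α β D z x + omegaForm α β D z y := by
  simp [omegaForm]; ring

lemma omega_smul_right (α β D c : ℝ) (x z : Fin 6 → ℝ) :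
    omegaForm α β D z (c • x) = c * omegaForm α β D z x := by
  simp [omegaForm]; ring

lemma omega_zero_left (α β D : ℝ) (z : Fin 6 → ℝ) : omegaForm α β D 0 z = 0 := by
  simp [omegaForm]

lemma omega_zero_right (α β D : ℝ) (z : Fin 6 → ℝ) : omegaForm α β D z 0 = 0 := by
  simp [omegaForm]

@[simp] lemma vec6_0 (a b c d e f : ℝ) : ![a,b,c,d,e,f] 0 = a := rfl
@[simp] lemma vec6_1 (a b c d e f : ℝ) : ![a,b,c,d,e,f] 1 = b := rfl
@[simp] lemma vec6_2 (a b c d e f : ℝ) : ![a,b,c,d,e,f] 2 = c := rfl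
@[simp] lemma vec6_3 (a b c d e f : ℝ) : ![a,b,c,d,e,f] 3 = d := rfl
@[simp] lemma vec6_4 (a b c d e f : ℝ) : ![a,b,c,d,e,f] 4 = e := rfl
@[simp] lemma vec6_5 (a b c d e f : ℝ) : ![a,b,c,d,e,f] 5 = f := rfl

/-- The plane Z = span{η₆, η₂ + (1/D)η₄' ... } arising as the tangent space
to W^u(X₋) at the landing point is a Lagrangian 3-plane: ω vanishes pairwise
on the spanning vectors, hence on all of Z, and Z is 3-dimensional. -/
theorem Z_is_Lagrangian (α β D V₀ W₀ : ℝ) (hα : α ≠ 0) (hβ : β ≠ 0) (hD : D ≠ 0) :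
    let η₂ : Fin 6 → ℝ := ![0, 1, 0, 0, -1, 0]
    let η₃ : Fin 6 → ℝ := ![0, 0, 1, 0, 0, -1]
    let η₄ : Fin 6 → ℝ := ![0, 0, 1, 0, 0, 1]
    let η₅ : Fin 6 → ℝ := ![0, 1, 0, 0, 1, 0]
    let η₆ : Fin 6 → ℝ := ![1, 0, 0, Real.sqrt 2, 0, 0]
    let v₂ : Fin 6 → ℝ := η₂ + (1 / D) • η₃ + (W₀ / D) • η₄ + V₀ • η₅
    let v₃ : Fin 6 → ℝ := -(α / β) • η₄ + η₅
    let Z : Submodule ℝ (Fin 6 → ℝ) := Submodule.span ℝ {η₆, v₂, v₃}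
    omegaForm α β D η₆ v₂ = 0 ∧ omegaForm α β D η₆ v₃ = 0 ∧
    omegaForm α β D v₂ v₃ = 0 ∧
    Module.finrank ℝ Z = 3 ∧ (∀ x ∈ Z, ∀ y ∈ Z, omegaForm α β D x y = 0) := by
  intro η₂ η₃ η₄ η₅ η₆ v₂ v₃ Z
  have h12 : omegaForm α β D η₆ v₂ = 0 := by
    simp [omegaForm, η₂, η₃, η₄, η₅, η₆, v₂, Matrix.cons_val_succ]
  have h13 : omegaForm α β D η₆ v₃ = 0 := by
    simp [omegaForm, η₄, η₅, η₆, v₃, Matrix.cons_val_succ]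
  have h23 : omegaForm α β D v₂ v₃ = 0 := by
    simp only [omegaForm, v₂, v₃, η₂, η₃, η₄, η₅, Pi.add_apply, Pi.smul_apply,
      Pi.neg_apply, smul_eq_mul, vec6_0, vec6_1, vec6_2, vec6_3, vec6_4, vec6_5]
    field_simp
    ring
  have hself : ∀ x, omegaForm α β D x x = 0 := by
    intro x; simp [omegaForm]; ring
  have hskew : ∀ x y, omegaForm α β D x y = -omegaForm α β D y x := by
    intro x y; simp [omegaForm]; ring
  refine ⟨h12, h13, h23, ?_, ?_⟩
  · -- finrank
    have hr : (Set.range ![η₆, v₂, v₃] : Set (Fin 6 → ℝ)) = {η₆, v₂, v₃} := by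
      ext x
      constructor
      · rintro ⟨i, rfl⟩
        fin_cases i
        · exact Or.inl rfl
        · exact Or.inr (Or.inl rfl)
        · exact Or.inr (Or.inr rfl)
      · rintro (rfl | rfl | rfl)
        exacts [⟨0, rfl⟩, ⟨1, rfl⟩, ⟨2, rfl⟩]
    have hli : LinearIndependent ℝ ![η₆, v₂, v₃] := by
      rw [Fintype.linearIndependent_iff]
      intro g hg
      have h0 := congrFun hg 0
      have h1 := congrFun hg 1
      have h4 := congrFun hg 4
      simp [Fin.sum_univ_three, η₂, η₃, η₄, η₅, η₆, v₂, v₃, Matrix.vecHead, Matrix.vecTail] at h0 h1 h4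
      have hg0 : g 0 = 0 := by linarith
      have hg1 : g 1 = 0 := by linear_combination (h1 - h4) / 2
      have hg2 : g 2 = 0 := by linear_combination h1 - (1 + V₀) * hg1
      intro i; fin_cases i <;> assumption
    have hcard := finrank_span_eq_card hli
    rw [hr] at hcard
    simpa using hcard
  · intro x hx y hy
    have key : ∀ x ∈ Z, omegaForm α β D η₆ x = 0 ∧ omegaForm α β D v₂ x = 0 ∧
        omegaForm α β D v₃ x = 0 := by
      intro x hx
      induction hx using Submodule.span_induction with
      | mem z hz =>
        rcases hz with rfl | rfl | rfl
        · exact ⟨hself _, by rw [hskew, h12]; ring, by rw [hskew, h13]; ring⟩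
        · exact ⟨h12, hself _, by rw [hskew, h23]; ring⟩
        · exact ⟨h13, h23, hself _⟩
      | zero => exact ⟨omega_zero_right .., omega_zero_right .., omega_zero_right ..⟩
      | add a b _ _ ha hb =>
        exact ⟨by rw [omega_add_right, ha.1, hb.1]; ring,
          by rw [omega_add_right, ha.2.1, hb.2.1]; ring,
          by rw [omega_add_right, ha.2.2, hb.2.2]; ring⟩
      | smul c a _ ha =>
        exact ⟨by rw [omega_smul_right, ha.1]; ring,
          by rw [omega_smul_right, ha.2.1]; ring,
          by rw [omega_smul_right, ha.2.2]; ring⟩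
    induction hx using Submodule.span_induction with
    | mem z hz =>
      rcases hz with rfl | rfl | rfl
      · exact (key y hy).1
      · exact (key y hy).2.1
      · exact (key y hy).2.2
    | zero => exact omega_zero_left ..
    | add a b _ _ ha hb => rw [omega_add_left, ha, hb]; ring
    | smul c a _ ha => rw [omega_smul_left, ha]; ring
end
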